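/- An RTAS is not directed if and only if there exist producible assemblies α, β and a position p ∈ dom(α) ∩ dom(β) such that α(p) ≠ β(p); equivalently, it is directed if and only if any two producible assemblies agree on every position lying in both of their domains. -/

import Mathlib

/-- A tile type: a quadruple of glue labels (strings). -/
structure TileType where
  north : String
  west : String
  south : String
  east : String
deriving DecidableEq

/-- An assembly: a partial function from ℤ² to tile types. -/
abbrev Assembly := ℤ × ℤ → Option TileType

/-- A rectilinear tile assembly system (RTAS) of width `w ≥ 1` and height `h ≥ 1`:
a finite set `T` of tile types, together with an L-shaped seed assembly `σ` whose
domain is `{(x,0) : 0 ≤ x ≤ w} ∪ {(0,y) : 0 ≤ y ≤ h}` and which uses tile types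
not in `T`. (All glues have strength 1 and the temperature is 2; this is encoded
in the attachment rule below.) -/
structure RTAS where
  w : ℕ
  h : ℕ
  hw : 1 ≤ w
  hh : 1 ≤ h
  T : Finset TileType
  σ : Assembly
  seed_dom : ∀ p : ℤ × ℤ, (σ p).isSome ↔
      (0 ≤ p.1 ∧ p.1 ≤ (w : ℤ) ∧ p.2 = 0) ∨ (p.1 = 0 ∧ 0 ≤ p.2 ∧ p.2 ≤ (h : ℤ))
  seed_not_in_T : ∀ p t, σ p = some t → t ∉ T

namespace RTAS

/-- A tile of type `t ∈ T` may attach to assembly `α` at position `p ∉ dom α`: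
both the west neighbor and the south neighbor lie in `dom α`, the east glue of
the west neighbor equals `t.west`, and the north glue of the south neighbor
equals `t.south` (cooperation of two strength-1 glues at temperature 2). -/
def Attaches (S : RTAS) (α : Assembly) (p : ℤ × ℤ) (t : TileType) : Prop :=
  t ∈ S.T ∧ α p = none ∧
    ∃ tw ts : TileType,
      α (p.1 - 1, p.2) = some tw ∧ α (p.1, p.2 - 1) = some ts ∧
      tw.east = t.west ∧ ts.north = t.south

/-- One-step growth: `β` is obtained from `α` by a single tile attachment. -/
def Step (S : RTAS) (α β : Assembly) : Prop :=
  ∃ p t, S.Attaches α p t ∧ β = Function.update α p (some t)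

/-- An assembly is producible if it is obtained from the seed `σ` by a finite
sequence of single-tile attachments. -/
def Producible (S : RTAS) (α : Assembly) : Prop :=
  Relation.ReflTransGen S.Step S.σ α

/-- A producible assembly is terminal if no tile can attach to it. -/
def Terminal (S : RTAS) (α : Assembly) : Prop :=
  S.Producible α ∧ ∀ p t, ¬ S.Attaches α p t

/-- The RTAS is directed if any two producible assemblies have a common
producible extension. -/
def IsDirected (S : RTAS) : Prop :=
  ∀ α β, S.Producible α → S.Producible β →
    ∃ γ, Relation.ReflTransGen S.Step α γ ∧ Relation.ReflTransGen S.Step β γ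

/-- Every tile type of `T` appears in some producible assembly. -/
def UsesAllTiles (S : RTAS) : Prop :=
  ∀ t ∈ S.T, ∃ (α : Assembly) (p : ℤ × ℤ), S.Producible α ∧ α p = some t

/-- The domain `{0,…,w} × {0,…,h}` of a pattern of width `w` and height `h`. -/
def PatternDom (w h : ℕ) : Set (ℤ × ℤ) :=
  {p | 0 ≤ p.1 ∧ p.1 ≤ (w : ℤ) ∧ 0 ≤ p.2 ∧ p.2 ≤ (h : ℤ)}

/-- `S` uniquely self-assembles the pattern `P` (of width `S.w` and height `S.h`)
with coloring function `f`: every terminal producible assembly `α` has domain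
`dom P` and satisfies `f (α p) = P p` on it. -/
def UniquelySelfAssembles (S : RTAS) (P : ℤ × ℤ → ℕ) (f : TileType → ℕ) : Prop :=
  ∀ α, S.Terminal α →
    (∀ p : ℤ × ℤ, (α p).isSome ↔ p ∈ PatternDom S.w S.h) ∧
    (∀ p t, α p = some t → f t = P p)

end RTAS

/-!
Producible assemblies only grow, so two assemblies with a common extension agree wherever both
are defined. Conversely, if `α` and `β` agree on their common domain, then replaying the
attachments that build `α` on top of `β` (skipping those at positions `β` already fills, with
the same tile) produces `α ∪ β` from `β`, and symmetrically from `α`.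
-/

namespace Assembly

def Subassembly (α β : Assembly) : Prop :=
  ∀ p t, α p = some t → β p = some t

def Consistent (α β : Assembly) : Prop :=
  ∀ p, (α p).isSome → (β p).isSome → α p = β p

def union (α β : Assembly) : Assembly :=
  fun p => (α p).or (β p)

theorem Subassembly.trans {α β γ : Assembly} (hαβ : Subassembly α β) (hβγ : Subassembly β γ) :
    Subassembly α γ :=
  fun p t hp => hβγ p t (hαβ p t hp)

theorem Consistent.of_subassembly_left {α α' β : Assembly} (h : Consistent α' β)
    (hα : Subassembly α α') : Consistent α β := by
  intro p hαp hβp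
  obtain ⟨t, ht⟩ := Option.isSome_iff_exists.mp hαp
  rw [ht, ← hα p t ht]
  exact h p (by simp [hα p t ht]) hβp

theorem Consistent.symm {α β : Assembly} (h : Consistent α β) : Consistent β α :=
  fun p hβ hα => (h p hα hβ).symm

theorem Consistent.of_subassembly {α β γ : Assembly} (hα : Subassembly α γ)
    (hβ : Subassembly β γ) : Consistent α β := by
  intro p hαp hβp
  obtain ⟨a, ha⟩ := Option.isSome_iff_exists.mp hαp
  obtain ⟨b, hb⟩ := Option.isSome_iff_exists.mp hβp
  rw [ha, hb, ← hα p a ha, ← hβ p b hb]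

theorem union_eq_right {α β : Assembly} (h : Subassembly α β) : union α β = β := by
  funext p
  cases hp : α p with
  | none => simp [union, hp]
  | some t => simp [union, hp, h p t hp]

theorem union_comm {α β : Assembly} (h : Consistent α β) : union α β = union β α := by
  funext p
  cases hα : α p with
  | none => cases β p <;> simp [union, hα]
  | some a =>
    cases hβ : β p with
    | none => simp [union, hα, hβ]
    | some b => simpa [union, hα, hβ] using h p (by simp [hα]) (by simp [hβ])

end Assembly

namespace RTAS

open Assembly Relation

variable {S : RTAS}

theorem Step.subassembly {α β : Assembly} (h : S.Step α β) : Subassembly α β := by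
  obtain ⟨q, u, hatt, rfl⟩ := h
  intro p t hp
  have hpq : p ≠ q := by rintro rfl; simp [hatt.2.1] at hp
  rwa [Function.update_of_ne hpq]

theorem subassembly_of_reflTransGen {α β : Assembly} (h : ReflTransGen S.Step α β) :
    Subassembly α β := by
  induction h with
  | refl => exact fun _ _ => id
  | tail _ hstep ih => exact ih.trans hstep.subassembly

/-- An attachment either repeats a tile `β` already has or can be made to `δ ∪ β` as well. -/
theorem Step.union_reflTransGen {δ δ' β : Assembly} (h : S.Step δ δ') (hβ : Consistent δ' β) :
    ReflTransGen S.Step (union δ β) (union δ' β) := by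
  obtain ⟨p, t, ⟨htT, hδp, tw, ts, hw, hs, hew, hns⟩, rfl⟩ := h
  cases hβp : β p with
  | some b =>
    have hb : β p = some t := by
      simpa [hβp] using (hβ p (by simp) (by simp [hβp])).symm
    convert ReflTransGen.refl using 1
    funext q
    by_cases hq : q = p
    · subst hq; simp [union, hδp, hb]
    · simp [union, Function.update_of_ne hq]
  | none =>
    refine ReflTransGen.single ⟨p, t, ⟨htT, by simp [union, hδp, hβp], tw, ts,
      by simp [union, hw], by simp [union, hs], hew, hns⟩, ?_⟩
    funext q
    by_cases hq : q = p
    · subst hq; simp [union, hβp]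
    · simp [union, Function.update_of_ne hq]

theorem reflTransGen_union {δ α β : Assembly} (h : ReflTransGen S.Step δ α)
    (hβ : Consistent α β) : ReflTransGen S.Step (union δ β) (union α β) := by
  induction h with
  | refl => exact ReflTransGen.refl
  | tail _ hstep ih =>
    exact (ih (hβ.of_subassembly_left hstep.subassembly)).trans (hstep.union_reflTransGen hβ)

theorem Producible.reflTransGen_union {α β : Assembly} (hα : S.Producible α)
    (hβ : S.Producible β) (hαβ : Consistent α β) : ReflTransGen S.Step β (union α β) := by
  simpa [union_eq_right (subassembly_of_reflTransGen hβ)] using RTAS.reflTransGen_union hα hαβ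

theorem isDirected_iff_consistent :
    S.IsDirected ↔ ∀ α β, S.Producible α → S.Producible β → Consistent α β := by
  constructor
  · intro hd α β hα hβ
    obtain ⟨γ, hαγ, hβγ⟩ := hd α β hα hβ
    exact Consistent.of_subassembly (subassembly_of_reflTransGen hαγ)
      (subassembly_of_reflTransGen hβγ)
  · intro H α β hα hβ
    have hαβ := H α β hα hβ
    refine ⟨union α β, ?_, hα.reflTransGen_union hβ hαβ⟩
    rw [union_comm hαβ]
    exact hβ.reflTransGen_union hα hαβ.symm

end RTAS

theorem not_directed_iff_conflict_general (S : RTAS) :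
    (¬ S.IsDirected ↔
      ∃ (α β : Assembly) (p : ℤ × ℤ), S.Producible α ∧ S.Producible β ∧
        (α p).isSome ∧ (β p).isSome ∧ α p ≠ β p) ∧
    (S.IsDirected ↔
      ∀ α β : Assembly, S.Producible α → S.Producible β →
        ∀ p : ℤ × ℤ, (α p).isSome → (β p).isSome → α p = β p) := by
  have key := RTAS.isDirected_iff_consistent (S := S)
  refine ⟨?_, key⟩
  rw [key]
  simp only [Assembly.Consistent]
  push Not
  exact ⟨fun ⟨α, β, hα, hβ, p, h⟩ => ⟨α, β, p, hα, hβ, h⟩,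
    fun ⟨α, β, p, hα, hβ, h⟩ => ⟨α, β, hα, hβ, p, h⟩⟩

/-- An RTAS is not directed iff there are producible assemblies disagreeing at
some common position; equivalently, it is directed iff any two producible
assemblies agree on every position lying in both of their domains. -/
theorem not_directed_iff_conflict (S : RTAS) (hused : S.UsesAllTiles) :
    (¬ S.IsDirected ↔
      ∃ (α β : Assembly) (p : ℤ × ℤ), S.Producible α ∧ S.Producible β ∧
        (α p).isSome ∧ (β p).isSome ∧ α p ≠ β p) ∧
    (S.IsDirected ↔
      ∀ α β : Assembly, S.Producible α → S.Producible β →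
        ∀ p : ℤ × ℤ, (α p).isSome → (β p).isSome → α p = β p) :=
  not_directed_iff_conflict_general S
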